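/- Let γ = 0 and d = 0, and let L > 0. Then every eigenvalue Λ of the linearisation L_pin about the unique pinned fluxon for parameters (L, 0, 0) satisfies −1 < Λ < 0; in particular the pinned fluxon is linearly stable. -/

import Mathlib

open Real Filter Topology

/-- The piecewise-constant Josephson tunneling critical current:
`D(x) = d` for `|x| < L` and `D(x) = 1` for `|x| > L`. -/
noncomputable def Dfun (L d : ℝ) (x : ℝ) : ℝ := if |x| < L then d else 1

/-- A pinned fluxon for parameters `(L, d, γ)`. -/
def IsPinnedFluxon (L d γ : ℝ) (φ : ℝ → ℝ) : Prop :=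
  ContDiff ℝ 1 φ ∧
  (∀ x : ℝ, x ≠ -L → x ≠ L →
    ∃ φ'' : ℝ, HasDerivAt (deriv φ) φ'' x ∧
      φ'' - Dfun L d x * Real.sin (φ x) + γ = 0) ∧
  Tendsto φ atBot (𝓝 (Real.arcsin γ)) ∧
  Tendsto φ atTop (𝓝 (Real.arcsin γ + 2 * π)) ∧
  Tendsto (deriv φ) atBot (𝓝 0) ∧
  Tendsto (deriv φ) atTop (𝓝 0)

/-- `ψ` is an eigenfunction of the linearisation about `φpin` with eigenvalue `Λ`. -/
def IsEigenfun (L d γ : ℝ) (φpin : ℝ → ℝ) (Λ : ℝ) (ψ : ℝ → ℝ) : Prop :=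
  ψ ≠ 0 ∧ ContDiff ℝ 1 ψ ∧
  (∀ x : ℝ, x ≠ -L → x ≠ L →
    ∃ ψ'' : ℝ, HasDerivAt (deriv ψ) ψ'' x ∧
      ψ'' - Dfun L d x * Real.cos (φpin x) * ψ x = Λ * ψ x) ∧
  Tendsto ψ atBot (𝓝 0) ∧ Tendsto ψ atTop (𝓝 0) ∧
  Tendsto (deriv ψ) atBot (𝓝 0) ∧ Tendsto (deriv ψ) atTop (𝓝 0)

/-- `Λ` is an eigenvalue of the linearisation `L_pin` about the pinned fluxon `φpin`. -/
def IsEigenvalue (L d γ : ℝ) (φpin : ℝ → ℝ) (Λ : ℝ) : Prop :=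
  ∃ ψ : ℝ → ℝ, IsEigenfun L d γ φpin Λ ψ

/-!
Outside `[-L, L]` the fluxon is a piece of the free kink: its energy `φ' ^ 2 / 2 + cos φ` is `1`,
it increases strictly from `0` to `2π`, and `φ' = 2 sin (φ / 2)`; inside, `φ'` is constant, which
forces `φ (-L) < π < φ L`. An eigenfunction `ψ` is then excluded in three regimes.

* `Λ ≥ 0`: the Riccati quantity `ψ ψ' - r ψ ^ 2`, with `r = cos (φ / 2) = φ'' / φ'` outside and
  `r = 0` inside, has derivative `(ψ' - r ψ) ^ 2 + Λ ψ ^ 2 ≥ 0`, jumps upwards at `±L` and tends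
  to `0` at `±∞`; hence it vanishes, and so does `ψ` on `[-L, L]`.
* `Λ = -1`: `u = -cos (φ / 2)` solves the equation on the right tail and tends to `1`, so the
  Wronskian of `ψ` and `u` vanishes and `ψ / u` is a constant tending to `0`.
* `Λ < -1`: with `ε = -(1 + Λ)`, the energy `(ψ' ^ 2 - (cos φ + Λ) ψ ^ 2) exp (φ / ε)` is
  nonnegative, nondecreasing on the right tail and tends to `0`, so `ψ L = ψ' L = 0`.

In each case uniqueness for the linear equation (Grönwall on each of the three regions) gives
`ψ = 0`.
-/

open Set

theorem Real.cos_eq_one_sub_two_mul_sin_half_sq (x : ℝ) : cos x = 1 - 2 * sin (x / 2) ^ 2 := by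
  have h := cos_two_mul (x / 2)
  rw [show 2 * (x / 2) = x by ring] at h
  linarith [sin_sq_add_cos_sq (x / 2)]

theorem Real.lt_pi_div_two_lt_of_sin_eq {a b : ℝ} (ha : 0 < a) (hab : a < b) (hb : b < π)
    (h : sin a = sin b) : a < π / 2 ∧ π / 2 < b := by
  constructor
  · by_contra! h'
    have := sin_lt_sin_of_lt_of_le_pi_div_two (x := π - b) (y := π - a) (by linarith)
      (by linarith) (by linarith)
    rw [sin_pi_sub, sin_pi_sub] at this
    linarith
  · by_contra! h'
    linarith [sin_lt_sin_of_lt_of_le_pi_div_two (by linarith) h' hab]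

theorem Convex.is_const_of_hasDerivAt_zero {f : ℝ → ℝ} {s : Set ℝ} (hs : Convex ℝ s)
    (hf : ContinuousOn f s) (hd : ∀ x ∈ interior s, HasDerivAt f 0 x) {x y : ℝ}
    (hx : x ∈ s) (hy : y ∈ s) : f x = f y := by
  have hmono := monotoneOn_of_hasDerivWithinAt_nonneg hs hf
    (fun z hz => (hd z hz).hasDerivWithinAt) fun _ _ => le_rfl
  have hanti := antitoneOn_of_hasDerivWithinAt_nonpos hs hf
    (fun z hz => (hd z hz).hasDerivWithinAt) fun _ _ => le_rfl
  rcases le_total x y with h | h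
  · exact le_antisymm (hmono hx hy h) (hanti hx hy h)
  · exact le_antisymm (hanti hy hx h) (hmono hy hx h)

theorem Convex.eq_of_hasDerivAt_zero_of_tendsto {f : ℝ → ℝ} {s : Set ℝ} {l : Filter ℝ}
    [l.NeBot] {c : ℝ} (hs : Convex ℝ s) (hf : ContinuousOn f s)
    (hd : ∀ x ∈ interior s, HasDerivAt f 0 x)
    (hl : ∀ᶠ x in l, x ∈ s) (hlim : Tendsto f l (𝓝 c)) {x : ℝ} (hx : x ∈ s) : f x = c :=
  tendsto_nhds_unique
    (tendsto_const_nhds.congr' (hl.mono fun _ hy => hs.is_const_of_hasDerivAt_zero hf hd hx hy))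
    hlim

theorem MonotoneOn.le_of_tendsto_atTop {f : ℝ → ℝ} {a c : ℝ} (hf : MonotoneOn f (Ici a))
    (hlim : Tendsto f atTop (𝓝 c)) {x : ℝ} (hx : a ≤ x) : f x ≤ c :=
  ge_of_tendsto hlim ((eventually_ge_atTop x).mono fun _ hy => hf hx (hx.trans hy) hy)

theorem MonotoneOn.ge_of_tendsto_atBot {f : ℝ → ℝ} {a c : ℝ} (hf : MonotoneOn f (Iic a))
    (hlim : Tendsto f atBot (𝓝 c)) {x : ℝ} (hx : x ≤ a) : c ≤ f x :=
  le_of_tendsto hlim ((eventually_le_atBot x).mono fun _ hy => hf (hy.trans hx) hx hy)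

theorem Convex.eq_zero_of_abs_hasDerivAt_le {f F : ℝ → ℝ} {K : ℝ} {s : Set ℝ} (hs : Convex ℝ s)
    (hf : ContinuousOn f s) (hf₀ : ∀ x ∈ s, 0 ≤ f x)
    (hF : ∀ x ∈ interior s, HasDerivAt f (F x) x) (hFK : ∀ x ∈ interior s, |F x| ≤ K * f x)
    {x₀ : ℝ} (hx₀ : x₀ ∈ s) (hfx₀ : f x₀ = 0) {x : ℝ} (hx : x ∈ s) : f x = 0 := by
  have hexp (c y : ℝ) : HasDerivAt (fun t => exp (c * t)) (exp (c * y) * c) y := by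
    simpa using ((hasDerivAt_id y).const_mul c).exp
  have hcont (c : ℝ) : ContinuousOn (fun t => f t * exp (c * t)) s :=
    hf.mul (by fun_prop)
  rcases le_total x₀ x with h | h
  · have hanti : AntitoneOn (fun t => f t * exp (-K * t)) s :=
      antitoneOn_of_hasDerivWithinAt_nonpos hs (hcont _)
        (fun y hy => ((hF y hy).mul (hexp (-K) y)).hasDerivWithinAt) fun y hy => by
          nlinarith [(abs_le.1 (hFK y hy)).2, exp_pos (-K * y)]
    have := hanti hx₀ hx h
    simp only [hfx₀, zero_mul] at this
    nlinarith [hf₀ x hx, exp_pos (-K * x)]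
  · have hmono : MonotoneOn (fun t => f t * exp (K * t)) s :=
      monotoneOn_of_hasDerivWithinAt_nonneg hs (hcont _)
        (fun y hy => ((hF y hy).mul (hexp K y)).hasDerivWithinAt) fun y hy => by
          nlinarith [(abs_le.1 (hFK y hy)).1, exp_pos (K * y)]
    have := hmono hx hx₀ h
    simp only [hfx₀, zero_mul] at this
    nlinarith [hf₀ x hx, exp_pos (K * x)]

theorem Convex.eq_zero_of_hasDerivAt_deriv_eq_mul {y q : ℝ → ℝ} {K : ℝ} {s : Set ℝ}
    (hs : Convex ℝ s) (hy : ContDiff ℝ 1 y) (hqK : ∀ x ∈ interior s, |q x| ≤ K)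
    (hq : ∀ x ∈ interior s, HasDerivAt (deriv y) (q x * y x) x)
    {x₀ : ℝ} (hx₀ : x₀ ∈ s) (h₀ : y x₀ = 0) (h₀' : deriv y x₀ = 0) {x : ℝ} (hx : x ∈ s) :
    y x = 0 ∧ deriv y x = 0 := by
  have hyd : Differentiable ℝ y := hy.differentiable one_ne_zero
  have hy' : Continuous (deriv y) := hy.continuous_deriv le_rfl
  have hbound (t : ℝ) (ht : t ∈ interior s) :
      |2 * y t * deriv y t * (1 + q t)| ≤ (1 + K) * (y t ^ 2 + deriv y t ^ 2) := by
    have h₁ : |2 * y t * deriv y t| ≤ y t ^ 2 + deriv y t ^ 2 :=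
      abs_le.2 ⟨by nlinarith [sq_nonneg (y t + deriv y t)],
        by nlinarith [sq_nonneg (y t - deriv y t)]⟩
    have h₂ : |1 + q t| ≤ 1 + K := (abs_add_le _ _).trans (by rw [abs_one]; linarith [hqK t ht])
    rw [abs_mul, mul_comm (1 + K)]
    exact mul_le_mul h₁ h₂ (abs_nonneg _) (by positivity)
  have hzero := hs.eq_zero_of_abs_hasDerivAt_le (f := fun t => y t ^ 2 + deriv y t ^ 2)
    ((hyd.continuous.pow 2).add (hy'.pow 2)).continuousOn (fun _ _ => by positivity)
    (fun t ht => (((hyd t).hasDerivAt.pow 2).add ((hq t ht).pow 2)).congr_deriv (by ring))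
    hbound hx₀ (by simp [h₀, h₀']) hx
  obtain ⟨h₁, h₂⟩ := (add_eq_zero_iff_of_nonneg (sq_nonneg _) (sq_nonneg _)).1 hzero
  exact ⟨pow_eq_zero_iff two_ne_zero |>.1 h₁, pow_eq_zero_iff two_ne_zero |>.1 h₂⟩

theorem eq_zero_of_hasDerivAt_deriv_eq_mul_of_ne {y q : ℝ → ℝ} {K a b : ℝ} (hab : a ≤ b)
    (hy : ContDiff ℝ 1 y) (hqK : ∀ x, |q x| ≤ K)
    (hq : ∀ x, x ≠ a → x ≠ b → HasDerivAt (deriv y) (q x * y x) x)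
    {x₀ : ℝ} (h₀ : y x₀ = 0) (h₀' : deriv y x₀ = 0) : y = 0 := by
  have spread (s : Set ℝ) (hs : Convex ℝ s) (hab : ∀ x ∈ interior s, x ≠ a ∧ x ≠ b) :
      ∀ x ∈ s, y x = 0 → deriv y x = 0 → ∀ z ∈ s, y z = 0 ∧ deriv y z = 0 :=
    fun _ hx h h' _ hz => hs.eq_zero_of_hasDerivAt_deriv_eq_mul hy (fun t _ => hqK t)
      (fun t ht => hq t (hab t ht).1 (hab t ht).2) hx h h' hz
  have hIic := spread (Iic a) (convex_Iic a) fun x hx => by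
    rw [interior_Iic, mem_Iio] at hx; exact ⟨hx.ne, (hx.trans_le hab).ne⟩
  have hIcc := spread (Icc a b) (convex_Icc a b) fun x hx => by
    rw [interior_Icc] at hx; exact ⟨hx.1.ne', hx.2.ne⟩
  have hIci := spread (Ici b) (convex_Ici b) fun x hx => by
    rw [interior_Ici, mem_Ioi] at hx; exact ⟨(hab.trans_lt hx).ne', hx.ne'⟩
  have hb : y b = 0 ∧ deriv y b = 0 := by
    rcases le_total x₀ a with h | h
    · obtain ⟨ha, ha'⟩ := hIic x₀ h h₀ h₀' a self_mem_Iic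
      exact hIcc a ⟨le_rfl, hab⟩ ha ha' b ⟨hab, le_rfl⟩
    rcases le_total x₀ b with h' | h'
    · exact hIcc x₀ ⟨h, h'⟩ h₀ h₀' b ⟨hab, le_rfl⟩
    · exact hIci x₀ h' h₀ h₀' b self_mem_Ici
  have ha := hIcc b ⟨hab, le_rfl⟩ hb.1 hb.2 a ⟨le_rfl, hab⟩
  funext x
  rcases le_total x a with h | h
  · exact (hIic a self_mem_Iic ha.1 ha.2 x h).1
  rcases le_total x b with h' | h'
  · exact (hIcc a ⟨le_rfl, hab⟩ ha.1 ha.2 x ⟨h, h'⟩).1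
  · exact (hIci b self_mem_Ici hb.1 hb.2 x h').1

theorem Convex.eq_of_hasDerivAt_deriv_eq_sin {φ : ℝ → ℝ} {s : Set ℝ} (hs : Convex ℝ s)
    (hφ : ContDiff ℝ 1 φ) (hode : ∀ x ∈ interior s, HasDerivAt (deriv φ) (sin (φ x)) x)
    {x₀ : ℝ} (hx₀ : x₀ ∈ s) (hcos : cos (φ x₀) = 1) (h₀' : deriv φ x₀ = 0) {x : ℝ}
    (hx : x ∈ s) : φ x = φ x₀ ∧ deriv φ x = 0 := by
  have hsin : sin (φ x₀) = 0 := sin_eq_zero_iff_cos_eq.2 (Or.inl hcos)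
  have hderiv : deriv (fun t => φ t - φ x₀) = deriv φ := funext fun t => deriv_sub_const _
  -- `φ - φ x₀` solves the linear equation `y'' = (sin y / y) y`, with coefficient bounded by `1`
  have key := hs.eq_zero_of_hasDerivAt_deriv_eq_mul (y := fun t => φ t - φ x₀)
    (q := fun t => sin (φ t - φ x₀) / (φ t - φ x₀)) (K := 1) (hφ.sub contDiff_const)
    (fun t _ => by rw [abs_div]; exact div_le_one_of_le₀ abs_sin_le_abs (abs_nonneg _))
    (fun t ht => by
      have hshift : sin (φ t - φ x₀) = sin (φ t) := by rw [sin_sub, hsin, hcos]; ring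
      rw [hderiv]
      convert hode t ht using 1
      rcases eq_or_ne (φ t - φ x₀) 0 with h | h
      · rw [h, mul_zero, ← hshift, h, sin_zero]
      · rw [div_mul_cancel₀ _ h, hshift])
    hx₀ (sub_self _) (by rw [hderiv]; exact h₀') hx
  rw [hderiv] at key
  exact ⟨sub_eq_zero.1 key.1, key.2⟩

theorem ne_neg_and_ne_of_lt_abs {L x : ℝ} (hL : 0 ≤ L) (hx : L < |x|) : x ≠ -L ∧ x ≠ L := by
  constructor <;> rintro rfl <;> simp [abs_of_nonneg hL] at hx

namespace IsPinnedFluxon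

variable {L d : ℝ} {φ : ℝ → ℝ}

theorem tendsto_atBot (hφ : IsPinnedFluxon L d 0 φ) : Tendsto φ atBot (𝓝 0) := by
  simpa using hφ.2.2.1

theorem tendsto_atTop (hφ : IsPinnedFluxon L d 0 φ) : Tendsto φ atTop (𝓝 (2 * π)) := by
  simpa using hφ.2.2.2.1

theorem hasDerivAt_deriv_of_lt_abs (hL : 0 ≤ L) (hφ : IsPinnedFluxon L d 0 φ) {x : ℝ}
    (hx : L < |x|) : HasDerivAt (deriv φ) (sin (φ x)) x := by
  obtain ⟨h₁, h₂⟩ := ne_neg_and_ne_of_lt_abs hL hx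
  obtain ⟨φ'', h, h'⟩ := hφ.2.1 x h₁ h₂
  rw [Dfun, if_neg (not_lt.2 hx.le)] at h'
  rwa [show φ'' = sin (φ x) by linarith] at h

theorem hasDerivAt_deriv_of_mem_Ioo (hφ : IsPinnedFluxon L 0 0 φ) {x : ℝ}
    (hx : x ∈ Ioo (-L) L) : HasDerivAt (deriv φ) 0 x := by
  obtain ⟨φ'', h, h'⟩ := hφ.2.1 x hx.1.ne' hx.2.ne
  rw [Dfun, if_pos (abs_lt.2 hx)] at h'
  rwa [show φ'' = 0 by linarith] at h

theorem deriv_eq_deriv_of_mem_Icc (hφ : IsPinnedFluxon L 0 0 φ) {x : ℝ}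
    (hx : x ∈ Icc (-L) L) : deriv φ x = deriv φ L :=
  (convex_Icc (-L) L).is_const_of_hasDerivAt_zero (hφ.1.continuous_deriv le_rfl).continuousOn
    (fun _ ht => hφ.hasDerivAt_deriv_of_mem_Ioo (by rwa [interior_Icc] at ht)) hx
    ⟨hx.1.trans hx.2, le_rfl⟩

/-- The energy `φ' ^ 2 / 2 + cos φ` is conserved on each tail and equals `1` at `±∞`. -/
theorem deriv_sq_eq (hL : 0 ≤ L) (hφ : IsPinnedFluxon L d 0 φ) {x : ℝ} (hx : L ≤ |x|) :
    deriv φ x ^ 2 = 2 * (1 - cos (φ x)) := by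
  have ⟨hφ1, _, _, _, h'bot, h'top⟩ := hφ
  have hφd : Differentiable ℝ φ := hφ1.differentiable one_ne_zero
  have hφ' : Continuous (deriv φ) := hφ1.continuous_deriv le_rfl
  set E : ℝ → ℝ := fun t => deriv φ t ^ 2 / 2 + cos (φ t)
  have hEc : Continuous E := ((hφ'.pow 2).div_const 2).add (continuous_cos.comp hφd.continuous)
  have hEd (t : ℝ) (ht : L < |t|) : HasDerivAt E 0 t :=
    ((((hφ.hasDerivAt_deriv_of_lt_abs hL ht).pow 2).div_const 2).add
      (hφd t).hasDerivAt.cos).congr_deriv (by ring)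
  suffices E x = 1 by simp only [E] at this; linarith
  rcases le_abs'.1 hx with h | h
  · refine (convex_Iic (-L)).eq_of_hasDerivAt_zero_of_tendsto hEc.continuousOn
      (fun t ht => hEd t ?_) (eventually_le_atBot _) ?_ h
    · rw [interior_Iic, mem_Iio] at ht; exact lt_abs.2 (Or.inr (by linarith))
    · simpa [E] using ((h'bot.pow 2).div_const 2).add
        ((continuous_cos.tendsto _).comp hφ.tendsto_atBot)
  · refine (convex_Ici L).eq_of_hasDerivAt_zero_of_tendsto hEc.continuousOn
      (fun t ht => hEd t ?_) (eventually_ge_atTop _) ?_ h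
    · rw [interior_Ici, mem_Ioi] at ht; exact lt_abs.2 (Or.inl ht)
    · simpa [E] using ((h'top.pow 2).div_const 2).add
        ((continuous_cos.tendsto _).comp hφ.tendsto_atTop)

theorem deriv_ne_zero (hL : 0 ≤ L) (hφ : IsPinnedFluxon L 0 0 φ) (x : ℝ) : deriv φ x ≠ 0 := by
  intro hx
  have hcos {t : ℝ} (ht : L ≤ |t|) (h : deriv φ t = 0) : cos (φ t) = 1 := by
    have := hφ.deriv_sq_eq hL ht
    rw [h] at this
    linarith
  -- a critical point on a tail is an equilibrium of the pendulum, so the whole tail is flat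
  have flat_right (t₀ : ℝ) (ht₀ : L ≤ t₀) (h : deriv φ t₀ = 0) (t : ℝ) (ht : L ≤ t) :
      deriv φ t = 0 :=
    ((convex_Ici L).eq_of_hasDerivAt_deriv_eq_sin hφ.1
      (fun u hu => hφ.hasDerivAt_deriv_of_lt_abs hL (lt_abs.2 (Or.inl (by simpa using hu))))
      (show t₀ ∈ Ici L from ht₀) (hcos (ht₀.trans (le_abs_self _)) h) h
      (show t ∈ Ici L from ht)).2
  have flat_left (t₀ : ℝ) (ht₀ : t₀ ≤ -L) (h : deriv φ t₀ = 0) (t : ℝ) (ht : t ≤ -L) :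
      deriv φ t = 0 :=
    ((convex_Iic (-L)).eq_of_hasDerivAt_deriv_eq_sin hφ.1
      (fun u hu => hφ.hasDerivAt_deriv_of_lt_abs hL
        (lt_abs.2 (Or.inr (by rw [interior_Iic, mem_Iio] at hu; linarith))))
      (show t₀ ∈ Iic (-L) from ht₀) (hcos (le_abs'.2 (Or.inl ht₀)) h) h
      (show t ∈ Iic (-L) from ht)).2
  have hLL : -L ≤ L := by linarith
  have hR : deriv φ L = 0 := by
    rcases le_total L x with h | h
    · exact flat_right x h hx L le_rfl
    rcases le_total (-L) x with h' | h'
    · rw [← hφ.deriv_eq_deriv_of_mem_Icc ⟨h', h⟩, hx]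
    · rw [← hφ.deriv_eq_deriv_of_mem_Icc ⟨le_rfl, hLL⟩]; exact flat_left x h' hx (-L) le_rfl
  have hall (t : ℝ) : deriv φ t = 0 := by
    rcases le_total L t with h | h
    · exact flat_right L le_rfl hR t h
    rcases le_total (-L) t with h' | h'
    · rw [hφ.deriv_eq_deriv_of_mem_Icc ⟨h', h⟩, hR]
    · exact flat_left (-L) le_rfl (by rw [hφ.deriv_eq_deriv_of_mem_Icc ⟨le_rfl, hLL⟩, hR]) t h'
  have hconst := is_const_of_deriv_eq_zero (hφ.1.differentiable one_ne_zero) hall 0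
  have hbot := tendsto_nhds_unique (tendsto_const_nhds.congr hconst) hφ.tendsto_atBot
  have htop := tendsto_nhds_unique (tendsto_const_nhds.congr hconst) hφ.tendsto_atTop
  linarith [pi_pos]

theorem deriv_pos (hL : 0 ≤ L) (hφ : IsPinnedFluxon L 0 0 φ) (x : ℝ) : 0 < deriv φ x := by
  have hφd : Differentiable ℝ φ := hφ.1.differentiable one_ne_zero
  by_contra! hx
  have hanti : Antitone φ := antitone_of_deriv_nonpos hφd fun y => by
    by_contra! hy
    obtain ⟨z, hz⟩ := mem_range_of_exists_le_of_exists_ge (hφ.1.continuous_deriv le_rfl)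
      ⟨x, hx⟩ ⟨y, hy.le⟩
    exact hφ.deriv_ne_zero hL z hz
  linarith [hanti.le_of_tendsto hφ.tendsto_atTop 0, hanti.ge_of_tendsto hφ.tendsto_atBot 0,
    pi_pos]

theorem strictMono (hL : 0 ≤ L) (hφ : IsPinnedFluxon L 0 0 φ) : StrictMono φ :=
  strictMono_of_deriv_pos (hφ.deriv_pos hL)

theorem mem_Ioo (hL : 0 ≤ L) (hφ : IsPinnedFluxon L 0 0 φ) (x : ℝ) : φ x ∈ Ioo 0 (2 * π) :=
  ⟨((hφ.strictMono hL).monotone.le_of_tendsto hφ.tendsto_atBot (x - 1)).trans_lt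
      (hφ.strictMono hL (sub_one_lt x)),
    (hφ.strictMono hL (lt_add_one x)).trans_le
      ((hφ.strictMono hL).monotone.ge_of_tendsto hφ.tendsto_atTop (x + 1))⟩

theorem deriv_eq_two_mul_sin_half (hL : 0 ≤ L) (hφ : IsPinnedFluxon L 0 0 φ) {x : ℝ}
    (hx : L ≤ |x|) : deriv φ x = 2 * sin (φ x / 2) := by
  obtain ⟨h₀, h₂π⟩ := hφ.mem_Ioo hL x
  have hsin : 0 < sin (φ x / 2) := sin_pos_of_pos_of_lt_pi (by linarith) (by linarith)
  refine (sq_eq_sq₀ (hφ.deriv_pos hL x).le (by positivity)).1 ?_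
  rw [hφ.deriv_sq_eq hL hx, cos_eq_one_sub_two_mul_sin_half_sq]
  ring

theorem hasDerivAt_cos_half (hL : 0 ≤ L) (hφ : IsPinnedFluxon L 0 0 φ) {x : ℝ} (hx : L ≤ |x|) :
    HasDerivAt (fun t => cos (φ t / 2)) (-sin (φ x / 2) ^ 2) x :=
  (((hφ.1.differentiable one_ne_zero x).hasDerivAt.div_const 2).cos).congr_deriv
    (by rw [hφ.deriv_eq_two_mul_sin_half hL hx]; ring)

theorem tendsto_half_atTop (hφ : IsPinnedFluxon L d 0 φ) :
    Tendsto (fun x => φ x / 2) atTop (𝓝 π) := by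
  simpa using hφ.tendsto_atTop.div_const 2

theorem apply_neg_lt_pi_lt_apply (hL : 0 < L) (hφ : IsPinnedFluxon L 0 0 φ) :
    φ (-L) < π ∧ π < φ L := by
  have hsin : sin (φ (-L) / 2) = sin (φ L / 2) := by
    have h₁ := hφ.deriv_eq_two_mul_sin_half hL.le (x := -L) (by rw [abs_neg, abs_of_pos hL])
    have h₂ := hφ.deriv_eq_two_mul_sin_half hL.le (x := L) (le_abs_self L)
    have := hφ.deriv_eq_deriv_of_mem_Icc ⟨le_rfl, by linarith⟩
    linarith
  have := lt_pi_div_two_lt_of_sin_eq (by linarith [(hφ.mem_Ioo hL.le (-L)).1])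
    (by linarith [hφ.strictMono hL.le (neg_lt_self hL)]) (by linarith [(hφ.mem_Ioo hL.le L).2]) hsin
  constructor <;> linarith

theorem cos_half_apply_neg_pos (hL : 0 < L) (hφ : IsPinnedFluxon L 0 0 φ) :
    0 < cos (φ (-L) / 2) :=
  cos_pos_of_mem_Ioo ⟨by linarith [pi_pos, (hφ.mem_Ioo hL.le (-L)).1],
    by linarith [(hφ.apply_neg_lt_pi_lt_apply hL).1]⟩

theorem cos_half_neg_of_le (hL : 0 < L) (hφ : IsPinnedFluxon L 0 0 φ) {x : ℝ} (hx : L ≤ x) :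
    cos (φ x / 2) < 0 :=
  cos_neg_of_pi_div_two_lt_of_lt
    (by linarith [(hφ.apply_neg_lt_pi_lt_apply hL).2, (hφ.strictMono hL.le).monotone hx])
    (by linarith [pi_pos, (hφ.mem_Ioo hL.le x).2])

end IsPinnedFluxon

namespace IsEigenfun

variable {L d γ Λ : ℝ} {φ ψ : ℝ → ℝ}

theorem hasDerivAt_deriv (hψ : IsEigenfun L d γ φ Λ ψ) {x : ℝ} (h₁ : x ≠ -L) (h₂ : x ≠ L) :
    HasDerivAt (deriv ψ) ((Dfun L d x * cos (φ x) + Λ) * ψ x) x := by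
  obtain ⟨ψ'', h, h'⟩ := hψ.2.2.1 x h₁ h₂
  rwa [show ψ'' = (Dfun L d x * cos (φ x) + Λ) * ψ x by linear_combination h'] at h

theorem hasDerivAt_deriv_of_lt_abs (hL : 0 ≤ L) (hψ : IsEigenfun L d γ φ Λ ψ) {x : ℝ}
    (hx : L < |x|) : HasDerivAt (deriv ψ) ((cos (φ x) + Λ) * ψ x) x := by
  obtain ⟨h₁, h₂⟩ := ne_neg_and_ne_of_lt_abs hL hx
  simpa [Dfun, not_lt.2 hx.le] using hψ.hasDerivAt_deriv h₁ h₂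

theorem hasDerivAt_deriv_of_mem_Ioo (hψ : IsEigenfun L 0 γ φ Λ ψ) {x : ℝ}
    (hx : x ∈ Ioo (-L) L) : HasDerivAt (deriv ψ) (Λ * ψ x) x := by
  simpa [Dfun, abs_lt.2 hx] using hψ.hasDerivAt_deriv hx.1.ne' hx.2.ne

theorem deriv_ne_zero_of_eq_zero (hL : 0 ≤ L) (hψ : IsEigenfun L d γ φ Λ ψ) {x₀ : ℝ}
    (h₀ : ψ x₀ = 0) : deriv ψ x₀ ≠ 0 := fun h₀' =>
  hψ.1 <| eq_zero_of_hasDerivAt_deriv_eq_mul_of_ne (K := max |d| 1 + |Λ|) (by linarith) hψ.2.1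
    (fun x => by
      refine (abs_add_le _ _).trans (add_le_add_left ?_ _)
      rw [abs_mul]
      refine (mul_le_of_le_one_right (abs_nonneg _) (abs_cos_le_one _)).trans ?_
      unfold Dfun; split_ifs <;> simp)
    (fun x h₁ h₂ => hψ.hasDerivAt_deriv h₁ h₂) h₀ h₀'

theorem not_eventuallyEq_zero (hL : 0 ≤ L) (hψ : IsEigenfun L d γ φ Λ ψ) (x₀ : ℝ) :
    ¬ ψ =ᶠ[𝓝 x₀] 0 := fun h =>
  hψ.deriv_ne_zero_of_eq_zero hL h.eq_of_nhds (by simpa using h.deriv_eq)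

/-- The energy `G = ψ' ^ 2 - (cos φ + Λ) ψ ^ 2 ≥ ε ψ ^ 2` has `G' = φ' ψ ^ 2 sin φ ≥ -φ' G / ε`
on the right tail, which the weight compensates. -/
theorem monotoneOn_energy_mul_exp (hL : 0 ≤ L) (hφ : IsPinnedFluxon L 0 0 φ)
    (hψ : IsEigenfun L 0 0 φ Λ ψ) {ε : ℝ} (hε : 0 < ε) (hΛ : Λ ≤ -1 - ε) :
    MonotoneOn (fun x => (deriv ψ x ^ 2 - (cos (φ x) + Λ) * ψ x ^ 2) * exp (φ x / ε)) (Ici L) := by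
  have hψd : Differentiable ℝ ψ := hψ.2.1.differentiable one_ne_zero
  have hφd : Differentiable ℝ φ := hφ.1.differentiable one_ne_zero
  set G : ℝ → ℝ := fun x => deriv ψ x ^ 2 - (cos (φ x) + Λ) * ψ x ^ 2
  refine monotoneOn_of_hasDerivWithinAt_nonneg (convex_Ici L)
    (f' := fun x => exp (φ x / ε) * deriv φ x * (sin (φ x) * ψ x ^ 2 + G x / ε))
    (((((hψ.2.1.continuous_deriv le_rfl).pow 2).sub (((continuous_cos.comp hφd.continuous).add
      continuous_const).mul (hψd.continuous.pow 2))).mul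
      (continuous_exp.comp (hφd.continuous.div_const ε))).continuousOn)
    (fun x hx => ?_) (fun x _ => ?_)
  · rw [interior_Ici, mem_Ioi] at hx
    have hG : HasDerivAt G (sin (φ x) * deriv φ x * ψ x ^ 2) x :=
      (((hψ.hasDerivAt_deriv_of_lt_abs hL (lt_abs.2 (Or.inl hx))).pow 2).sub
        ((((hφd x).hasDerivAt.cos).add_const Λ).mul ((hψd x).hasDerivAt.fun_pow 2))).congr_deriv
        (by ring)
    exact (hG.mul ((hφd x).hasDerivAt.div_const ε).exp).hasDerivWithinAt.congr_deriv
      (by field_simp)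
  · have hGψ : ψ x ^ 2 ≤ G x / ε := (le_div_iff₀ hε).2 (by
      nlinarith [cos_le_one (φ x), sq_nonneg (ψ x), sq_nonneg (deriv ψ x)])
    have := hφ.deriv_pos hL x
    have : 0 ≤ sin (φ x) * ψ x ^ 2 + G x / ε := by
      nlinarith [neg_one_le_sin (φ x), sq_nonneg (ψ x)]
    positivity

/-- `-cos (φ / 2)` solves the equation for `Λ = -1` on the right tail; this is its Wronskian
with `ψ`. -/
theorem wronskian_cos_half_eq_zero (hL : 0 < L) (hφ : IsPinnedFluxon L 0 0 φ)
    (hψ : IsEigenfun L 0 0 φ (-1) ψ) {x : ℝ} (hx : L ≤ x) :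
    deriv ψ x * cos (φ x / 2) + ψ x * sin (φ x / 2) ^ 2 = 0 := by
  have ⟨_, hψ1, _, _, hψtop, _, hψ'top⟩ := hψ
  have hψd : Differentiable ℝ ψ := hψ1.differentiable one_ne_zero
  have hφd : Differentiable ℝ φ := hφ.1.differentiable one_ne_zero
  refine (convex_Ici L).eq_of_hasDerivAt_zero_of_tendsto (((hψ1.continuous_deriv le_rfl).mul
    (continuous_cos.comp (hφd.continuous.div_const 2))).add (hψd.continuous.mul
    ((continuous_sin.comp (hφd.continuous.div_const 2)).pow 2))).continuousOn
    (fun t ht => ?_) (eventually_ge_atTop L) ?_ hx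
  · rw [interior_Ici, mem_Ioi] at ht
    have hsd : HasDerivAt (fun t => sin (φ t / 2)) (cos (φ t / 2) * sin (φ t / 2)) t :=
      ((hφd t).hasDerivAt.div_const 2).sin.congr_deriv
        (by rw [hφ.deriv_eq_two_mul_sin_half hL.le (ht.le.trans (le_abs_self t))]; ring)
    refine (((hψ.hasDerivAt_deriv_of_lt_abs hL.le (lt_abs.2 (Or.inl ht))).mul
      (hφ.hasDerivAt_cos_half hL.le (ht.le.trans (le_abs_self t)))).add
      ((hψd t).hasDerivAt.mul (hsd.fun_pow 2))).congr_deriv ?_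
    rw [cos_eq_one_sub_two_mul_sin_half_sq (φ t)]
    ring
  · have := (hψ'top.mul ((continuous_cos.tendsto _).comp hφ.tendsto_half_atTop)).add
      (hψtop.mul (((continuous_sin.tendsto _).comp hφ.tendsto_half_atTop).pow 2))
    rwa [zero_mul, zero_mul, zero_add] at this

/-- On the tails this is the Riccati form of the equation with respect to `cos (φ / 2) = φ'' / φ'`;
its derivative is `(ψ' - cos (φ / 2) ψ) ^ 2 + Λ ψ ^ 2`. -/
theorem monotoneOn_riccati (hL : 0 ≤ L) (hφ : IsPinnedFluxon L 0 0 φ)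
    (hψ : IsEigenfun L 0 0 φ Λ ψ) (hΛ : 0 ≤ Λ) {s : Set ℝ} (hs : Convex ℝ s)
    (hsL : ∀ x ∈ interior s, L < |x|) :
    MonotoneOn (fun x => ψ x * deriv ψ x - cos (φ x / 2) * ψ x ^ 2) s := by
  have hψd : Differentiable ℝ ψ := hψ.2.1.differentiable one_ne_zero
  have hφd : Differentiable ℝ φ := hφ.1.differentiable one_ne_zero
  refine monotoneOn_of_hasDerivWithinAt_nonneg hs
    ((hψd.continuous.mul (hψ.2.1.continuous_deriv le_rfl)).sub
      ((continuous_cos.comp (hφd.continuous.div_const 2)).mul (hψd.continuous.pow 2))).continuousOn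
    (f' := fun x => (deriv ψ x - cos (φ x / 2) * ψ x) ^ 2 + Λ * ψ x ^ 2)
    (fun x hx => ?_) (fun x _ => by positivity)
  refine (((hψd x).hasDerivAt.mul (hψ.hasDerivAt_deriv_of_lt_abs hL (hsL x hx))).sub
    ((hφ.hasDerivAt_cos_half hL (hsL x hx).le).mul
      ((hψd x).hasDerivAt.fun_pow 2))).hasDerivWithinAt.congr_deriv ?_
  rw [cos_eq_one_sub_two_mul_sin_half_sq (φ x)]
  linear_combination (-ψ x ^ 2) * sin_sq_add_cos_sq (φ x / 2)

theorem monotoneOn_mul_deriv (hψ : IsEigenfun L 0 γ φ Λ ψ) (hΛ : 0 ≤ Λ) :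
    MonotoneOn (fun x => ψ x * deriv ψ x) (Icc (-L) L) := by
  have hψd : Differentiable ℝ ψ := hψ.2.1.differentiable one_ne_zero
  exact monotoneOn_of_hasDerivWithinAt_nonneg (convex_Icc _ _)
    (hψd.continuous.mul (hψ.2.1.continuous_deriv le_rfl)).continuousOn
    (f' := fun x => deriv ψ x ^ 2 + Λ * ψ x ^ 2)
    (fun x hx => ((hψd x).hasDerivAt.mul (hψ.hasDerivAt_deriv_of_mem_Ioo
      (by rwa [interior_Icc] at hx))).hasDerivWithinAt.congr_deriv (by ring))
    (fun x _ => by positivity)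

end IsEigenfun

namespace IsPinnedFluxon

variable {L Λ : ℝ} {φ : ℝ → ℝ}

theorem not_isEigenvalue_of_lt_neg_one (hL : 0 < L) (hφ : IsPinnedFluxon L 0 0 φ)
    (hΛ : Λ < -1) : ¬ IsEigenvalue L 0 0 φ Λ := by
  rintro ⟨ψ, hψ⟩
  have ⟨_, _, _, _, hψtop, _, hψ'top⟩ := hψ
  have hε : 0 < -(1 + Λ) := by linarith
  set G : ℝ → ℝ := fun x => deriv ψ x ^ 2 - (cos (φ x) + Λ) * ψ x ^ 2
  have hlim : Tendsto (fun x => G x * exp (φ x / -(1 + Λ))) atTop (𝓝 0) := by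
    simpa using ((hψ'top.pow 2).sub ((((continuous_cos.tendsto _).comp hφ.tendsto_atTop).add_const
      Λ).mul (hψtop.pow 2))).mul ((continuous_exp.tendsto _).comp (hφ.tendsto_atTop.div_const _))
  have hGL : G L ≤ 0 := by
    have := (hψ.monotoneOn_energy_mul_exp hL.le hφ hε (by linarith)).le_of_tendsto_atTop hlim
      le_rfl
    nlinarith [exp_pos (φ L / -(1 + Λ))]
  have hψL : ψ L = 0 := pow_eq_zero_iff two_ne_zero |>.1 (by
    nlinarith [cos_le_one (φ L), sq_nonneg (ψ L), sq_nonneg (deriv ψ L)])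
  refine hψ.deriv_ne_zero_of_eq_zero hL.le hψL (pow_eq_zero_iff two_ne_zero |>.1 ?_)
  simp only [G, hψL] at hGL
  nlinarith [sq_nonneg (deriv ψ L)]

theorem not_isEigenvalue_neg_one (hL : 0 < L) (hφ : IsPinnedFluxon L 0 0 φ) :
    ¬ IsEigenvalue L 0 0 φ (-1) := by
  rintro ⟨ψ, hψ⟩
  have ⟨_, hψ1, _, _, hψtop, _, _⟩ := hψ
  have hψd : Differentiable ℝ ψ := hψ1.differentiable one_ne_zero
  have hφd : Differentiable ℝ φ := hφ.1.differentiable one_ne_zero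
  have hc (x : ℝ) (hx : L ≤ x) : cos (φ x / 2) < 0 := hφ.cos_half_neg_of_le hL hx
  -- the vanishing Wronskian makes `ψ / cos (φ / 2)` constant on the right tail
  have hv (x : ℝ) (hx : L ≤ x) : ψ x / cos (φ x / 2) = 0 := by
    refine (convex_Ici L).eq_of_hasDerivAt_zero_of_tendsto (hψd.continuous.continuousOn.div
      (continuous_cos.comp (hφd.continuous.div_const 2)).continuousOn fun t ht => (hc t ht).ne)
      (fun t ht => ?_) (eventually_ge_atTop L) ?_ hx
    · rw [interior_Ici, mem_Ioi] at ht
      refine ((hψd t).hasDerivAt.div (hφ.hasDerivAt_cos_half hL.le (ht.le.trans (le_abs_self t)))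
        (hc t ht.le).ne).congr_deriv ?_
      rw [div_eq_zero_iff]
      left
      linarith [hψ.wronskian_cos_half_eq_zero hL hφ ht.le]
    · have := hψtop.div ((continuous_cos.tendsto _).comp hφ.tendsto_half_atTop) (by simp)
      rwa [zero_div] at this
  refine hψ.not_eventuallyEq_zero hL.le (L + 1) ?_
  filter_upwards [Ioi_mem_nhds (lt_add_one L)] with x hx
  simpa [(hc x (le_of_lt hx)).ne] using hv x (le_of_lt hx)

theorem not_isEigenvalue_of_nonneg (hL : 0 < L) (hφ : IsPinnedFluxon L 0 0 φ) (hΛ : 0 ≤ Λ) :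
    ¬ IsEigenvalue L 0 0 φ Λ := by
  rintro ⟨ψ, hψ⟩
  have ⟨_, hψ1, _, hψbot, hψtop, hψ'bot, hψ'top⟩ := hψ
  have hψd : Differentiable ℝ ψ := hψ1.differentiable one_ne_zero
  have hLL : -L ≤ L := by linarith
  set P : ℝ → ℝ := fun x => ψ x * deriv ψ x - cos (φ x / 2) * ψ x ^ 2
  set Q : ℝ → ℝ := fun x => ψ x * deriv ψ x
  have hPl : 0 ≤ P (-L) := by
    refine (hψ.monotoneOn_riccati hL.le hφ hΛ (convex_Iic _) fun x hx => ?_).ge_of_tendsto_atBot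
      ?_ le_rfl
    · rw [interior_Iic, mem_Iio] at hx; exact lt_abs.2 (Or.inr (by linarith))
    · simpa using (hψbot.mul hψ'bot).sub (((continuous_cos.tendsto _).comp
        (hφ.tendsto_atBot.div_const 2)).mul (hψbot.pow 2))
  have hPr : P L ≤ 0 := by
    refine (hψ.monotoneOn_riccati hL.le hφ hΛ (convex_Ici _) fun x hx => ?_).le_of_tendsto_atTop
      ?_ le_rfl
    · rw [interior_Ici, mem_Ioi] at hx; exact lt_abs.2 (Or.inl hx)
    · simpa using (hψtop.mul hψ'top).sub (((continuous_cos.tendsto _).comp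
        hφ.tendsto_half_atTop).mul (hψtop.pow 2))
  have hQmono : MonotoneOn Q (Icc (-L) L) := hψ.monotoneOn_mul_deriv hΛ
  -- `P` jumps up by `cos (φ (-L) / 2) ψ (-L) ^ 2` at `-L` and by `-cos (φ L / 2) ψ L ^ 2` at `L`,
  -- so `0 ≤ P (-L) ≤ Q (-L) ≤ Q L ≤ P L ≤ 0`
  have hcl := hφ.cos_half_apply_neg_pos hL
  have hcr := hφ.cos_half_neg_of_le hL le_rfl
  have hQ := hQmono ⟨le_rfl, hLL⟩ ⟨hLL, le_rfl⟩ hLL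
  have hQl : 0 ≤ Q (-L) := by nlinarith [sq_nonneg (ψ (-L))]
  have hQr : Q L ≤ 0 := by nlinarith [sq_nonneg (ψ L)]
  have hψl : ψ (-L) = 0 := pow_eq_zero_iff two_ne_zero |>.1 (by nlinarith [sq_nonneg (ψ (-L))])
  have hQ0 (x : ℝ) (hx : x ∈ Icc (-L) L) : ψ x * deriv ψ x = 0 :=
    le_antisymm ((hQmono hx ⟨hLL, le_rfl⟩ hx.2).trans hQr)
      (hQl.trans (hQmono ⟨le_rfl, hLL⟩ hx hx.1))
  have hψ0 (x : ℝ) (hx : x ∈ Icc (-L) L) : ψ x = 0 := by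
    have hsq := (convex_Icc (-L) L).is_const_of_hasDerivAt_zero (f := fun t => ψ t ^ 2)
      (hψd.continuous.pow 2).continuousOn (fun t ht => ((hψd t).hasDerivAt.fun_pow 2).congr_deriv
        (by rw [interior_Icc] at ht; linear_combination 2 * hQ0 t (Ioo_subset_Icc_self ht)))
      hx ⟨le_rfl, hLL⟩
    rw [hψl, zero_pow two_ne_zero] at hsq
    exact pow_eq_zero_iff two_ne_zero |>.1 hsq
  refine hψ.not_eventuallyEq_zero hL.le 0 ?_
  filter_upwards [Ioo_mem_nhds (neg_neg_of_pos hL) hL] with x hx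
  exact hψ0 x (Ioo_subset_Icc_self hx)

end IsPinnedFluxon

/-- For `γ = 0`, `d = 0` and `L > 0`, every eigenvalue `Λ` of the linearisation
about the (unique) pinned fluxon for parameters `(L, 0, 0)` satisfies `−1 < Λ < 0`;
in particular the pinned fluxon is linearly stable (all eigenvalues `≤ 0`). -/
theorem stmt7 (L : ℝ) (hL : 0 < L) (φ : ℝ → ℝ) (hφ : IsPinnedFluxon L 0 0 φ)
    (Λ : ℝ) (hΛ : IsEigenvalue L 0 0 φ Λ) :
    -1 < Λ ∧ Λ < 0 := by
  refine ⟨lt_of_not_ge fun h => ?_, lt_of_not_ge fun h => hφ.not_isEigenvalue_of_nonneg hL h hΛ⟩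
  rcases h.lt_or_eq with h | rfl
  · exact hφ.not_isEigenvalue_of_lt_neg_one hL h hΛ
  · exact hφ.not_isEigenvalue_neg_one hL hΛ
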